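/- Let f : ℕ → ℕ and suppose that for all k, m, n ∈ ℕ, every m×n (0,1)-matrix with at least f(k)·n entries equal to 1, with at most two 1's in each row, and with pairwise distinct rows, contains a member of each class of M(k). Then for every k ∈ ℕ, every k×k permutation matrix M, and every n ∈ ℕ, every n×n (0,1)-matrix with at least f(k)·n entries equal to 1 contains M. -/

import Mathlib

/-- The element `i ∈ [k]` viewed as an element of `[2k]` (the left half). -/
def finL (k : ℕ) (i : Fin k) : Fin (2 * k) := ⟨i.1, by have := i.isLt; omega⟩

/-- The element `π(i) + k` viewed as an element of `[2k]` (the right half). -/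
def finR (k : ℕ) (i : Fin k) : Fin (2 * k) := ⟨k + i.1, by have := i.isLt; omega⟩

/-- The number of entries of the `(0,1)`-matrix `A` that equal 1. -/
def onesCount {m n : ℕ} (A : Fin m → Fin n → Bool) : ℕ :=
  (Finset.univ.filter fun p : Fin m × Fin n => A p.1 p.2 = true).card

/-- `A` contains a member of each class of `M(k)`. -/
def ContainsMk {m n : ℕ} (k : ℕ) (A : Fin m → Fin n → Bool) : Prop :=
  ∀ σ : Equiv.Perm (Fin k), ∃ r : Fin k → Fin m, ∃ c : Fin (2 * k) → Fin n,
    Function.Injective r ∧ StrictMono c ∧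
    ∀ i : Fin k, A (r i) (c (finL k i)) = true ∧ A (r i) (c (finR k (σ i))) = true

/-- The `(0,1)`-matrix `A` contains the `(0,1)`-matrix `Q`: some submatrix of `A` of the
same dimensions as `Q` has a 1 in every position in which `Q` has a 1. -/
def MContains {m n p q : ℕ} (A : Fin m → Fin n → Bool) (Q : Fin p → Fin q → Bool) : Prop :=
  ∃ ρ : Fin p → Fin m, ∃ γ : Fin q → Fin n, StrictMono ρ ∧ StrictMono γ ∧
    ∀ i j, Q i j = true → A (ρ i) (γ j) = true

/-- The `k × k` permutation matrix of the permutation `σ`. -/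
def permMatrix {k : ℕ} (σ : Equiv.Perm (Fin k)) : Fin k → Fin k → Bool :=
  fun i j => decide (σ i = j)

/-!
Each 1-entry `(i, j)` of `A` becomes a row of a matrix `B` whose two 1s sit in column `j` and in
column `n + i`, so `B` has twice as many 1s as `A`, two 1s per row, distinct rows, and `2n`
columns when `A` is `n × n`. In a copy of `(I, M_{σ⁻¹})` in `B`, each row has its 1 in the
identity block to the left of its 1 in the permutation block, so the former is the column `j`
and the latter the column `n + i` of that row. Hence the identity block reads off increasing
columns `j` of `A` and the permutation block, reordered by `σ`, increasing rows `i`. The corresponding 1-entries of `A` form a copy of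
the permutation matrix of `σ`.
-/

open Finset

lemma finL_lt_finR {k : ℕ} (i i' : Fin k) : finL k i < finR k i' := by
  simp only [finL, finR, Fin.mk_lt_mk]
  omega

lemma finL_lt_finL_iff {k : ℕ} {i i' : Fin k} : finL k i < finL k i' ↔ i < i' :=
  Iff.rfl

lemma finR_lt_finR_iff {k : ℕ} {i i' : Fin k} : finR k i < finR k i' ↔ i < i' :=
  Nat.add_lt_add_iff_left

lemma onesCount_eq_sum_card_filter {m n : ℕ} (A : Fin m → Fin n → Bool) :
    onesCount A = ∑ i, (univ.filter fun j => A i j = true).card := by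
  simp only [onesCount, card_filter, Fintype.sum_prod_type]

lemma castAdd_lt_natAdd {m n : ℕ} (j : Fin n) (i : Fin m) : Fin.castAdd m j < Fin.natAdd n i := by
  simp only [Fin.lt_def, Fin.val_castAdd, Fin.val_natAdd]
  omega

section EdgeMatrix

variable {m n : ℕ} (A : Fin m → Fin n → Bool)

noncomputable def onesEquiv : Fin (onesCount A) ≃ {p : Fin m × Fin n // A p.1 p.2 = true} :=
  (Fintype.equivFinOfCardEq (by rw [Fintype.card_subtype]; rfl)).symm

/-- The edge–vertex incidence matrix of the bipartite graph of `A`, with the column vertices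
`j` listed before the row vertices `n + i`. -/
noncomputable def edgeMatrix (r : Fin (onesCount A)) (c : Fin (n + m)) : Bool :=
  decide (c = Fin.castAdd m (onesEquiv A r).1.2 ∨ c = Fin.natAdd n (onesEquiv A r).1.1)

variable {A}

lemma edgeMatrix_eq_true_iff {r : Fin (onesCount A)} {c : Fin (n + m)} :
    edgeMatrix A r c = true ↔
      c = Fin.castAdd m (onesEquiv A r).1.2 ∨ c = Fin.natAdd n (onesEquiv A r).1.1 :=
  decide_eq_true_iff

lemma card_filter_edgeMatrix (r : Fin (onesCount A)) :
    (univ.filter fun c => edgeMatrix A r c = true).card = 2 := by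
  have hrow : (univ.filter fun c => edgeMatrix A r c = true) =
      {Fin.castAdd m (onesEquiv A r).1.2, Fin.natAdd n (onesEquiv A r).1.1} := by
    ext c
    simp [edgeMatrix_eq_true_iff]
  rw [hrow, card_pair (castAdd_lt_natAdd _ _).ne]

lemma onesCount_edgeMatrix : onesCount (edgeMatrix A) = 2 * onesCount A := by
  simp [onesCount_eq_sum_card_filter (edgeMatrix A), card_filter_edgeMatrix, mul_comm]

lemma edgeMatrix_eq_of_lt {r : Fin (onesCount A)} {a b : Fin (n + m)}
    (ha : edgeMatrix A r a = true) (hb : edgeMatrix A r b = true) (hab : a < b) :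
    a = Fin.castAdd m (onesEquiv A r).1.2 ∧ b = Fin.natAdd n (onesEquiv A r).1.1 := by
  have := castAdd_lt_natAdd (onesEquiv A r).1.2 (onesEquiv A r).1.1
  rcases edgeMatrix_eq_true_iff.1 ha with rfl | rfl <;>
    rcases edgeMatrix_eq_true_iff.1 hb with rfl | rfl
  all_goals first
    | exact ⟨rfl, rfl⟩
    | exact absurd hab (lt_irrefl _)
    | exact absurd (hab.trans this) (lt_irrefl _)

lemma edgeMatrix_injective : Function.Injective (edgeMatrix A) := by
  intro r r' h
  set p := onesEquiv A r
  have hj : edgeMatrix A r' (Fin.castAdd m p.1.2) = true := by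
    rw [← h]
    exact edgeMatrix_eq_true_iff.2 (Or.inl rfl)
  have hi : edgeMatrix A r' (Fin.natAdd n p.1.1) = true := by
    rw [← h]
    exact edgeMatrix_eq_true_iff.2 (Or.inr rfl)
  obtain ⟨hj', hi'⟩ := edgeMatrix_eq_of_lt hj hi (castAdd_lt_natAdd _ _)
  exact (onesEquiv A).injective
    (Subtype.ext (Prod.ext ((Fin.natAdd_inj n).1 hi') (Fin.castAdd_inj.1 hj')))

theorem mContains_permMatrix_of_containsMk_edgeMatrix {k : ℕ}
    (hB : ContainsMk k (edgeMatrix A)) (σ : Equiv.Perm (Fin k)) :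
    MContains A (permMatrix σ) := by
  obtain ⟨r, c, -, hc, hrc⟩ := hB σ⁻¹
  set e := onesEquiv A
  have hdecode (i : Fin k) : c (finL k i) = Fin.castAdd m (e (r i)).1.2 ∧
      c (finR k (σ⁻¹ i)) = Fin.natAdd n (e (r i)).1.1 :=
    edgeMatrix_eq_of_lt (hrc i).1 (hrc i).2 (hc (finL_lt_finR _ _))
  have hrow (s : Fin k) : c (finR k s) = Fin.natAdd n (e (r (σ s))).1.1 := by
    simpa using (hdecode (σ s)).2
  refine ⟨fun s => (e (r (σ s))).1.1, fun t => (e (r t)).1.2, fun s s' hss => ?_,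
    fun t t' htt => ?_, fun s t hst => ?_⟩
  · have := hc (finR_lt_finR_iff.2 hss)
    rwa [hrow, hrow, Fin.natAdd_lt_natAdd_iff] at this
  · have := hc (finL_lt_finL_iff.2 htt)
    rwa [(hdecode t).1, (hdecode t').1, (Fin.strictMono_castAdd m).lt_iff_lt] at this
  · obtain rfl : σ s = t := by simpa [permMatrix] using hst
    exact (e (r (σ s))).2

end EdgeMatrix

theorem stmt7 (f : ℕ → ℕ)
    (h : ∀ k m n : ℕ, 1 ≤ n → ∀ A : Fin m → Fin n → Bool,
      f k * n ≤ onesCount A →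
      (∀ i : Fin m, (Finset.univ.filter fun j => A i j = true).card ≤ 2) →
      Function.Injective A → ContainsMk k A) :
    ∀ k : ℕ, ∀ σ : Equiv.Perm (Fin k), ∀ n : ℕ, 1 ≤ n → ∀ A : Fin n → Fin n → Bool,
      f k * n ≤ onesCount A → MContains A (permMatrix σ) := by
  intro k σ n hn A hA
  have hones : f k * (n + n) ≤ onesCount (edgeMatrix A) := by
    rw [onesCount_edgeMatrix]
    linarith
  exact mContains_permMatrix_of_containsMk_edgeMatrix
    (h k _ (n + n) (by omega) _ hones (fun r => (card_filter_edgeMatrix r).le)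
      edgeMatrix_injective) σ
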